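/- arXiv:1712.04846 — 2 statements merged into one kernel-verified Lean document; each statement's English description precedes it below -/
import Mathlib

section
/- Let n ≥ 2 and let Ψ: [0,∞) → ℝ be continuously differentiable. If the mapping F ↦ Ψ(‖dev_n log U‖²) is rank-one convex on GL⁺(n), where U = √(FᵀF), then Ψ is monotone increasing on [0,∞). -/
open Matrix Real

attribute [local instance] Matrix.frobeniusNormedAddCommGroup Matrix.frobeniusNormedSpace

noncomputable section

/-- The space of real `n × n` matrices. -/
abbrev Mat (n : ℕ) := Matrix (Fin n) (Fin n) ℝ

/-- `GL⁺(n)`: real `n × n` matrices with positive determinant. -/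
def GLp (n : ℕ) : Set (Mat n) := {F | 0 < F.det}

/-- Frobenius inner product `⟨X, Y⟩ = tr (X Yᵀ)`. -/
def inn {n : ℕ} (X Y : Mat n) : ℝ := (X * Yᵀ).trace

/-- Squared Frobenius norm `‖X‖² = tr (Xᵀ X)`. -/
def nsq {n : ℕ} (X : Mat n) : ℝ := (Xᵀ * X).trace

/-- The primary matrix function associated to `f : ℝ → ℝ`: applies `f` to the eigenvalues
in a spectral decomposition of a Hermitian (i.e. real symmetric) matrix, junk value `0`
otherwise. -/
def matFun {n : ℕ} (f : ℝ → ℝ) (A : Mat n) : Mat n :=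
  if hA : A.IsHermitian then
    (hA.eigenvectorUnitary : Mat n) * Matrix.diagonal (f ∘ hA.eigenvalues) *
      (star (hA.eigenvectorUnitary : Mat n))
  else 0

/-- Principal square root of a symmetric positive semidefinite matrix. -/
def matSqrt {n : ℕ} (A : Mat n) : Mat n := matFun Real.sqrt A

/-- Principal matrix logarithm of a symmetric positive definite matrix. -/
def matLog {n : ℕ} (A : Mat n) : Mat n := matFun Real.log A

/-- `log U` where `U = √(FᵀF)` is the right stretch tensor of `F`. -/
def logU {n : ℕ} (F : Mat n) : Mat n := matLog (matSqrt (Fᵀ * F))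

/-- `log V` where `V = √(FFᵀ)` is the left stretch tensor of `F`. -/
def logV {n : ℕ} (F : Mat n) : Mat n := matLog (matSqrt (F * Fᵀ))

/-- Deviatoric (trace-free) part `dev_n X = X - (tr X / n) 𝟙`. -/
def dev {n : ℕ} (X : Mat n) : Mat n := X - (X.trace / n) • (1 : Mat n)

/-- Rank-one convexity of `W : GL⁺(n) → ℝ`: along every rank-one line segment contained in
`GL⁺(n)`, the function is convex. -/
def RankOneConvex {n : ℕ} (W : Mat n → ℝ) : Prop :=
  ∀ F ∈ GLp n, ∀ ξ η : Fin n → ℝ, ∀ I : Set ℝ, Convex ℝ I →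
    (∀ t ∈ I, 0 < (F + t • vecMulVec ξ η).det) →
    ConvexOn ℝ I (fun t => W (F + t • vecMulVec ξ η))


section StretchAlongAxis

variable {n : ℕ}

/-- For a diagonal matrix the spectral decomposition may mix only eigenvectors sharing an
eigenvalue, so the primary matrix function acts entrywise on the diagonal. -/
theorem matFun_diagonal (f : ℝ → ℝ) (d : Fin n → ℝ) :
    matFun f (diagonal d) = diagonal (f ∘ d) := by
  have hA := isHermitian_diagonal d
  set U : Mat n := (hA.eigenvectorUnitary : Mat n)
  have hUstar : U * star U = 1 := Unitary.mul_star_self_of_mem hA.eigenvectorUnitary.2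
  have hstarU : star U * U = 1 := Unitary.star_mul_self_of_mem hA.eigenvectorUnitary.2
  have hAU : diagonal d * U = U * diagonal hA.eigenvalues := by
    have hspec := hA.spectral_theorem
    rw [RCLike.ofReal_real_eq_id, Function.id_comp, Unitary.conjStarAlgAut_apply] at hspec
    conv_lhs => rw [hspec]
    rw [mul_assoc, hstarU, mul_one]
  have hfAU : diagonal (f ∘ d) * U = U * diagonal (f ∘ hA.eigenvalues) := by
    ext i j
    have hij : d i * U i j = U i j * hA.eigenvalues j := by
      simpa [diagonal_mul, mul_diagonal] using congrFun (congrFun hAU i) j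
    simp only [diagonal_mul, mul_diagonal, Function.comp_apply]
    rcases eq_or_ne (U i j) 0 with h | h
    · simp [h]
    · rw [mul_comm (U i j), mul_right_cancel₀ h (hij.trans (mul_comm _ _))]
  rw [matFun, dif_pos hA, ← hfAU, mul_assoc, hUstar, mul_one]

theorem logU_diagonal (d : Fin n → ℝ) :
    logU (diagonal d) = diagonal (fun i => Real.log (d i)) := by
  rw [logU, diagonal_transpose, diagonal_mul_diagonal, matSqrt, matFun_diagonal, matLog,
    matFun_diagonal]
  congr 1
  funext i
  simp [Real.sqrt_mul_self_eq_abs, Real.log_abs]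

theorem nsq_dev (X : Mat n) : nsq (dev X) = nsq X - X.trace ^ 2 / n := by
  rcases eq_or_ne n 0 with rfl | hn
  · simp [nsq, Matrix.trace]
  simp only [nsq, dev, transpose_sub, transpose_smul, transpose_one, sub_mul, mul_sub,
    smul_mul_assoc, mul_smul_comm, one_mul, mul_one, trace_sub, trace_smul,
    trace_transpose, trace_one, Fintype.card_fin, smul_eq_mul]
  field_simp
  ring

theorem nsq_dev_diagonal_single (i : Fin n) (x : ℝ) :
    nsq (dev (diagonal (Pi.single i x))) = (1 - 1 / n) * x ^ 2 := by
  have hsq : nsq (diagonal (Pi.single i x)) = x ^ 2 := by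
    simp [nsq, diagonal_mul_diagonal, trace_diagonal, sq, Pi.single_apply]
  rw [nsq_dev, hsq, trace_diagonal, Finset.sum_pi_single']
  simp only [Finset.mem_univ, if_true]
  ring

theorem log_comp_mulSingle (i : Fin n) (s : ℝ) :
    (fun j => Real.log ((Pi.mulSingle i s : Fin n → ℝ) j)) = Pi.single i (Real.log s) := by
  funext j
  rcases eq_or_ne j i with rfl | hj
  · simp
  · simp [hj]

theorem one_add_smul_vecMulVec_single (i : Fin n) (t : ℝ) :
    1 + t • vecMulVec (Pi.single i 1) (Pi.single i 1) = diagonal (Pi.mulSingle i (1 + t)) := by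
  rw [← single_eq_single_vecMulVec_single, ← diagonal_single, ← diagonal_one, ← diagonal_smul,
    diagonal_add]
  congr 1
  funext j
  rcases eq_or_ne j i with rfl | hj
  · simp
  · simp [hj]

theorem RankOneConvex.convexOn_diagonal_mulSingle {W : Mat n → ℝ} (hW : RankOneConvex W)
    (i : Fin n) : ConvexOn ℝ (Set.Ioi 0) (fun s => W (diagonal (Pi.mulSingle i s))) := by
  have hline := hW 1 (by simp [GLp]) (Pi.single i 1) (Pi.single i 1) (Set.Ioi (-1))
    (convex_Ioi _) fun t ht => by
      rw [one_add_smul_vecMulVec_single, det_diagonal, Finset.prod_pi_mulSingle']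
      simpa [neg_lt_iff_pos_add'] using ht
  have hpre : (fun z : ℝ => -1 + z) ⁻¹' Set.Ioi (-1) = Set.Ioi 0 := by ext s; simp
  have hshift := hline.translate_right (-1)
  rw [hpre] at hshift
  refine hshift.congr fun s _ => ?_
  rw [Function.comp_apply, one_add_smul_vecMulVec_single, add_neg_cancel_left]

end StretchAlongAxis

theorem monotoneOn_of_convexOn_comp_log_sq {Ψ : ℝ → ℝ} {c : ℝ} (hc : 0 < c)
    (h : ConvexOn ℝ (Set.Ioi 0) (fun s => Ψ (c * Real.log s ^ 2))) :
    MonotoneOn Ψ (Set.Ici 0) := by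
  have hroot : ∀ x ∈ Set.Ici (0 : ℝ), c * √(x / c) ^ 2 = x := fun x hx => by
    rw [Real.sq_sqrt (div_nonneg hx hc.le), mul_div_cancel₀ _ hc.ne']
  intro a ha b hb hab
  have hab' : √(a / c) ≤ √(b / c) := Real.sqrt_le_sqrt (by gcongr)
  calc Ψ a = Ψ (c * Real.log (Real.exp √(a / c)) ^ 2) := by rw [Real.log_exp, hroot a ha]
    _ ≤ max (Ψ (c * Real.log (Real.exp (-√(b / c))) ^ 2))
          (Ψ (c * Real.log (Real.exp √(b / c)) ^ 2)) :=
        h.le_max_of_mem_Icc (Real.exp_pos _) (Real.exp_pos _)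
          ⟨Real.exp_le_exp.2 (by linarith [Real.sqrt_nonneg (a / c), Real.sqrt_nonneg (b / c)]),
            Real.exp_le_exp.2 hab'⟩
    _ = Ψ b := by rw [Real.log_exp, Real.log_exp, neg_sq, hroot b hb, max_self]

theorem monotonicity_from_rank_one_convexity_devLogU_general
    (n : ℕ) (hn : 2 ≤ n)
    (Ψ : ℝ → ℝ)
    (hW : RankOneConvex (fun F : Mat n => Ψ (nsq (dev (logU F))))) :
    MonotoneOn Ψ (Set.Ici 0) := by
  have hc : 0 < 1 - 1 / (n : ℝ) := by
    have : (2 : ℝ) ≤ n := by exact_mod_cast hn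
    rw [sub_pos, div_lt_one (by linarith)]
    linarith
  refine monotoneOn_of_convexOn_comp_log_sq hc ?_
  refine (hW.convexOn_diagonal_mulSingle ⟨0, by omega⟩).congr fun s _ => ?_
  simp only [logU_diagonal, log_comp_mulSingle, nsq_dev_diagonal_single]

/-- **Lemma 3.2.** Let `n ≥ 2` and let `Ψ : [0,∞) → ℝ` be continuously differentiable. If
`F ↦ Ψ(‖dev_n log U‖²)` (with `U = √(FᵀF)`) is rank-one convex on `GL⁺(n)`, then `Ψ` is
monotone increasing on `[0,∞)`. -/
theorem monotonicity_from_rank_one_convexity_devLogU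
    (n : ℕ) (hn : 2 ≤ n)
    (Ψ : ℝ → ℝ) (hΨ : ContDiffOn ℝ 1 Ψ (Set.Ici 0))
    (hW : RankOneConvex (fun F : Mat n => Ψ (nsq (dev (logU F))))) :
    MonotoneOn Ψ (Set.Ici 0) :=
  monotonicity_from_rank_one_convexity_devLogU_general n hn Ψ hW
end
end

section
/- Let F = diag(1, e²⁰, e¹⁵) ∈ GL⁺(3), ξ = (0, 1/√2, 1/√2)ᵀ ∈ ℝ³, and η = (1/29)·(0, 10e²⁰, −25e¹⁵)ᵀ ∈ ℝ³. Define h(t) = ‖dev₃ log √((F + t·ξ⊗η)(F + t·ξ⊗η)ᵀ)‖² for t in an open interval around 0 on which det(F + t·ξ⊗η) > 0 (one has [det(F + t·ξ⊗η)]² = e⁷⁰(15t − 29√2)²/1682). Then h is twice differentiable at 0 with h'(0) = 0 and h''(0) = −25(4e¹⁰ − 49)/(841(e¹⁰ − 1)) < 0; in particular, the function F ↦ ‖dev₃ log V‖² (with V = √(FFᵀ)) has a vanishing first derivative and a negative second derivative at F in the rank-one direction ξ⊗η. -/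
open Matrix Real

attribute [local instance] Matrix.frobeniusNormedAddCommGroup Matrix.frobeniusNormedSpace

/-! Along the path the first basis vector is fixed, so `(F + tξ⊗η)(F + tξ⊗η)ᵀ` has eigenvalues
`1, λ₊, λ₋`, the roots of `X² - T X + D` where `T` and `D` are the trace and determinant of its
lower `2 × 2` block; after rescaling `s = t / (29√2)` both are quadratics in `s`. As `log V` has
eigenvalues `½ log λ`, `‖dev₃ log V‖² = (2 log λ₊ - log D)² / 8 + (log D)² / 24`, which is smooth
near `s = 0`, where `λ₊ > λ₋ > 0`. Differentiating `λ₊` implicitly,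
`λ₊' = (T' λ₊ - D') / (2λ₊ - T)`, and evaluating at `s = 0`, where `λ₊ = e⁴⁰` and `D = e⁷⁰`,
gives both derivatives. -/

open Polynomial Topology

noncomputable section

section Spectral

variable {n : ℕ} {A : Mat n}

lemma matFun_eq_cfc (hA : A.IsHermitian) (f : ℝ → ℝ) : matFun f A = cfc f A := by
  rw [hA.cfc_eq, IsHermitian.cfc, matFun, dif_pos hA, Unitary.conjStarAlgAut_apply]
  rfl

lemma continuousOn_spectrum (B : Mat n) (f : ℝ → ℝ) : ContinuousOn f (spectrum ℝ B) :=
  B.finite_real_spectrum.continuousOn f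

lemma logV_eq_cfc (F : Mat n) : logV F = cfc (fun x => log √x) (F * Fᵀ) := by
  have hA : (F * Fᵀ).IsHermitian := by
    simpa using isHermitian_mul_conjTranspose_self F
  have hS : (cfc sqrt (F * Fᵀ)).IsHermitian := cfc_predicate sqrt (F * Fᵀ)
  rw [logV, matLog, matSqrt, matFun_eq_cfc hA, matFun_eq_cfc hS]
  exact (cfc_comp log sqrt _ hA (((F * Fᵀ).finite_real_spectrum.image _).continuousOn _)
    (continuousOn_spectrum _ _)).symm

lemma map_eigenvalues_eq_of_charpoly_eq (hA : A.IsHermitian) {c : Fin n → ℝ}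
    (hc : A.charpoly = ∏ i, (X - C (c i))) :
    Multiset.map hA.eigenvalues Finset.univ.val = Multiset.map c Finset.univ.val := by
  have := hA.roots_charpoly_eq_eigenvalues
  rw [hc, Finset.prod_eq_multiset_prod,
    show (fun i => X - C (c i)) = (fun a => X - C a) ∘ c from rfl, ← Multiset.map_map,
    roots_multiset_prod_X_sub_C] at this
  simpa using this.symm

lemma sum_eigenvalues_eq_of_charpoly_eq (hA : A.IsHermitian) {c : Fin n → ℝ}
    (hc : A.charpoly = ∏ i, (X - C (c i))) (g : ℝ → ℝ) :
    ∑ i, g (hA.eigenvalues i) = ∑ i, g (c i) := by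
  simpa [Finset.sum_eq_multiset_sum, Multiset.map_map, Function.comp_def] using
    congrArg (fun s => (s.map g).sum) (map_eigenvalues_eq_of_charpoly_eq hA hc)

lemma trace_cfc (hA : A.IsHermitian) (g : ℝ → ℝ) :
    (cfc g A).trace = ∑ i, g (hA.eigenvalues i) := by
  have hB : (cfc g A).IsHermitian := cfc_predicate g A
  rw [hB.trace_eq_sum_eigenvalues]
  exact sum_eigenvalues_eq_of_charpoly_eq hB (hA.charpoly_cfc_eq g) id

lemma nsq_dev_of_transpose_eq {X : Mat n} (hX : Xᵀ = X) :
    nsq (dev X) = (X * X).trace - X.trace ^ 2 / n := by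
  rcases eq_or_ne (n : ℝ) 0 with hn | hn
  · simp [nsq, dev, hn, hX]
  · simp only [nsq, dev, transpose_sub, transpose_smul, transpose_one, hX, sub_mul, mul_sub,
      Matrix.smul_mul, Matrix.mul_smul, one_mul, mul_one, smul_smul, trace_sub, trace_smul,
      trace_one, Fintype.card_fin, smul_eq_mul]
    field_simp
    ring

lemma nsq_dev_cfc (hA : A.IsHermitian) {c : Fin n → ℝ} (hc : A.charpoly = ∏ i, (X - C (c i)))
    (g : ℝ → ℝ) : nsq (dev (cfc g A)) = ∑ i, g (c i) ^ 2 - (∑ i, g (c i)) ^ 2 / n := by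
  have hB : (cfc g A).IsHermitian := cfc_predicate g A
  rw [nsq_dev_of_transpose_eq (by simpa using hB.eq),
    ← cfc_mul g g A (continuousOn_spectrum _ _) (continuousOn_spectrum _ _), trace_cfc hA,
    trace_cfc hA, sum_eigenvalues_eq_of_charpoly_eq hA hc g,
    sum_eigenvalues_eq_of_charpoly_eq hA hc (fun x => g x * g x)]
  simp only [sq]

end Spectral

def rootPlus (T D : ℝ) : ℝ := (T + √(T ^ 2 - 4 * D)) / 2
def rootMinus (T D : ℝ) : ℝ := (T - √(T ^ 2 - 4 * D)) / 2

lemma rootPlus_add_rootMinus (T D : ℝ) : rootPlus T D + rootMinus T D = T := by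
  unfold rootPlus rootMinus; ring

lemma rootPlus_mul_rootMinus {T D : ℝ} (h : 4 * D ≤ T ^ 2) :
    rootPlus T D * rootMinus T D = D := by
  have := Real.sq_sqrt (sub_nonneg.mpr h)
  unfold rootPlus rootMinus; linear_combination -this / 4

lemma rootMinus_nonneg {T D : ℝ} (hT : 0 ≤ T) (hD : 0 ≤ D) : 0 ≤ rootMinus T D := by
  have : √(T ^ 2 - 4 * D) ≤ T := by
    calc √(T ^ 2 - 4 * D) ≤ √(T ^ 2) := Real.sqrt_le_sqrt (by linarith)
      _ = T := Real.sqrt_sq hT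
  unfold rootMinus; linarith

lemma rootMinus_le_rootPlus (T D : ℝ) : rootMinus T D ≤ rootPlus T D := by
  unfold rootPlus rootMinus; linarith [Real.sqrt_nonneg (T ^ 2 - 4 * D)]

lemma X_sub_C_mul_X_sub_C {R : Type*} [CommRing R] (a b : R) :
    (X - C a) * (X - C b) = X ^ 2 - C (a + b) * X + C (a * b) := by
  simp only [map_add, map_mul]; ring

lemma mul_transpose_blockOne {R : Type*} [CommRing R] (α β γ δ : R) :
    !![1, 0, 0; 0, α, β; 0, γ, δ] * (!![1, 0, 0; 0, α, β; 0, γ, δ])ᵀ =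
      !![1, 0, 0; 0, α ^ 2 + β ^ 2, α * γ + β * δ; 0, α * γ + β * δ, γ ^ 2 + δ ^ 2] := by
  ext i j; fin_cases i <;> fin_cases j <;> simp [Matrix.mul_apply, Fin.sum_univ_three] <;> ring

lemma charpoly_blockOne {R : Type*} [CommRing R] (p q r : R) :
    (!![1, 0, 0; 0, p, q; 0, q, r] : Matrix (Fin 3) (Fin 3) R).charpoly =
      (X - C 1) * (X ^ 2 - C (p + r) * X + C (p * r - q ^ 2)) := by
  rw [Matrix.charpoly, Matrix.det_fin_three]
  simp [charmatrix]
  ring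

lemma nsq_dev_logV_blockOne {α β γ δ T D : ℝ} (hT : α ^ 2 + β ^ 2 + γ ^ 2 + δ ^ 2 = T)
    (hD : (α * δ - β * γ) ^ 2 = D) (hD0 : 0 < D) :
    nsq (dev (logV !![1, 0, 0; 0, α, β; 0, γ, δ])) =
      (2 * log (rootPlus T D) - log D) ^ 2 / 8 + log D ^ 2 / 24 := by
  set G : Mat 3 := !![1, 0, 0; 0, α, β; 0, γ, δ]
  have hdisc : 4 * D ≤ T ^ 2 := by
    rw [← hT, ← hD]
    nlinarith [sq_nonneg (α ^ 2 + β ^ 2 - γ ^ 2 - δ ^ 2), sq_nonneg (α * γ + β * δ)]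
  have hprod := rootPlus_mul_rootMinus hdisc
  have hc : (G * Gᵀ).charpoly = ∏ i, (X - C (![1, rootPlus T D, rootMinus T D] i)) := by
    rw [mul_transpose_blockOne, charpoly_blockOne, Fin.prod_univ_three]
    simp only [Matrix.cons_val_zero, Matrix.cons_val_one, Matrix.cons_val_two, Matrix.head_cons,
      Matrix.tail_cons]
    rw [mul_assoc, X_sub_C_mul_X_sub_C, rootPlus_add_rootMinus, hprod, ← hT, ← hD]
    ring_nf
  have hA : (G * Gᵀ).IsHermitian := by simpa using isHermitian_mul_conjTranspose_self G
  have hminus : 0 ≤ rootMinus T D := rootMinus_nonneg (by rw [← hT]; positivity) hD0.le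
  have hplus : 0 ≤ rootPlus T D := hminus.trans (rootMinus_le_rootPlus T D)
  have hlog : log (rootMinus T D) = log D - log (rootPlus T D) := by
    have hne : rootPlus T D * rootMinus T D ≠ 0 := by rw [hprod]; exact hD0.ne'
    have := log_mul (left_ne_zero_of_mul hne) (right_ne_zero_of_mul hne)
    rw [hprod] at this
    linarith
  rw [logV_eq_cfc, nsq_dev_cfc hA hc, Fin.sum_univ_three, Fin.sum_univ_three]
  simp only [Matrix.cons_val_zero, Matrix.cons_val_one, Matrix.cons_val_two, Matrix.head_cons,
    Matrix.tail_cons, Real.sqrt_one, log_one, Real.log_sqrt hplus, Real.log_sqrt hminus, hlog]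
  ring

lemma hasDerivAt_rootPlus {T D : ℝ → ℝ} {T' D' x : ℝ} (hT : HasDerivAt T T' x)
    (hD : HasDerivAt D D' x) (hdisc : 0 < T x ^ 2 - 4 * D x) :
    HasDerivAt (fun y => rootPlus (T y) (D y))
      ((T' * rootPlus (T x) (D x) - D') / (2 * rootPlus (T x) (D x) - T x)) x := by
  have hE : HasDerivAt (fun y => T y ^ 2 - 4 * D y) (2 * T x * T' - 4 * D') x :=
    ((hT.pow 2).sub (hD.const_mul 4)).congr_deriv (by simp)
  refine ((hT.add (hE.sqrt hdisc.ne')).div_const 2).congr_deriv ?_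
  have hR : √(T x ^ 2 - 4 * D x) ≠ 0 := (Real.sqrt_pos.mpr hdisc).ne'
  rw [rootPlus, show 2 * ((T x + √(T x ^ 2 - 4 * D x)) / 2) - T x = √(T x ^ 2 - 4 * D x) by ring]
  field_simp
  ring

lemma hasDerivAt_comp_mul_left {k : ℝ → ℝ} {c k' x : ℝ} (hk : HasDerivAt k k' (c * x)) :
    HasDerivAt (fun t => k (c * t)) (c * k') x :=
  (hk.comp x ((hasDerivAt_id x).const_mul c)).congr_deriv (by ring)

lemma hasDerivAt_deriv_comp_mul_left {k : ℝ → ℝ} {c κ x : ℝ}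
    (hk : HasDerivAt (deriv k) κ (c * x)) :
    HasDerivAt (deriv fun t => k (c * t)) (c ^ 2 * κ) x := by
  rw [funext fun t => deriv_comp_mul_left c k t]
  exact ((hasDerivAt_comp_mul_left hk).const_mul c).congr_deriv (by ring)

def pathMatrix (s : ℝ) : Mat 3 :=
  !![1, 0, 0;
     0, exp 20 * (1 + 10 * s), -(25 * exp 15 * s);
     0, 10 * exp 20 * s, exp 15 * (1 - 25 * s)]

lemma det_pathMatrix (s : ℝ) : (pathMatrix s).det = exp 35 * (1 - 15 * s) := by
  rw [pathMatrix, det_fin_three, show (35 : ℝ) = 20 + 15 by norm_num, exp_add]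
  simp
  ring

lemma diagonal_add_smul_vecMulVec (t : ℝ) :
    diagonal ![1, exp 20, exp 15] + t • vecMulVec ![0, 1 / √2, 1 / √2]
      ((1 / 29 : ℝ) • ![0, 10 * exp 20, -(25 * exp 15)]) = pathMatrix ((29 * √2)⁻¹ * t) := by
  ext i j
  fin_cases i <;> fin_cases j <;> simp [pathMatrix] <;> ring

-- The trace and determinant of the lower `2 × 2` block of `pathMatrix s * (pathMatrix s)ᵀ`.
def pathTrace (s : ℝ) : ℝ :=
  exp 40 * (1 + 20 * s + 200 * s ^ 2) + exp 30 * (1 - 50 * s + 1250 * s ^ 2)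
def pathDet (s : ℝ) : ℝ := exp 70 * (1 - 15 * s) ^ 2

def pathTrace' (s : ℝ) : ℝ := exp 40 * (20 + 400 * s) + exp 30 * (-50 + 2500 * s)
def pathDet' (s : ℝ) : ℝ := -(30 * exp 70 * (1 - 15 * s))

lemma hasDerivAt_pathTrace (s : ℝ) : HasDerivAt pathTrace (pathTrace' s) s := by
  have hs := hasDerivAt_id s
  have h40 := ((hs.const_mul 20).const_add 1).add ((hs.pow 2).const_mul 200)
  have h30 := ((hs.const_mul 50).const_sub 1).add ((hs.pow 2).const_mul 1250)
  refine ((h40.const_mul (exp 40)).add (h30.const_mul (exp 30))).congr_deriv ?_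
  simp [pathTrace']
  ring

lemma hasDerivAt_pathDet (s : ℝ) : HasDerivAt pathDet (pathDet' s) s := by
  have hs := ((hasDerivAt_id s).const_mul 15).const_sub 1
  refine ((hs.pow 2).const_mul (exp 70)).congr_deriv ?_
  simp [pathDet']
  ring

def pathEig (s : ℝ) : ℝ := rootPlus (pathTrace s) (pathDet s)
def pathEig' (s : ℝ) : ℝ :=
  (pathTrace' s * pathEig s - pathDet' s) / (2 * pathEig s - pathTrace s)
def pathEnergy (s : ℝ) : ℝ :=
  (2 * log (pathEig s) - log (pathDet s)) ^ 2 / 8 + log (pathDet s) ^ 2 / 24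
def pathEnergy' (s : ℝ) : ℝ :=
  (2 * log (pathEig s) - log (pathDet s)) *
      (2 * pathEig' s / pathEig s - pathDet' s / pathDet s) / 4 +
    log (pathDet s) * (pathDet' s / pathDet s) / 12

lemma exp_seventy : exp 70 = exp 40 * exp 30 := by rw [← exp_add]; norm_num

lemma exp_thirty_lt_exp_forty : exp 30 < exp 40 := exp_lt_exp.mpr (by norm_num)

lemma pathTrace_zero : pathTrace 0 = exp 40 + exp 30 := by simp [pathTrace]
lemma pathTrace'_zero : pathTrace' 0 = 20 * exp 40 - 50 * exp 30 := by simp [pathTrace']; ring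
lemma pathDet_zero : pathDet 0 = exp 40 * exp 30 := by simp [pathDet, exp_seventy]
lemma pathDet'_zero : pathDet' 0 = -(30 * (exp 40 * exp 30)) := by simp [pathDet', exp_seventy]

lemma pathEig_zero : pathEig 0 = exp 40 := by
  have h : pathTrace 0 ^ 2 - 4 * pathDet 0 = (exp 40 - exp 30) ^ 2 := by
    rw [pathTrace_zero, pathDet_zero]; ring
  rw [pathEig, rootPlus, h, Real.sqrt_sq (sub_nonneg.mpr exp_thirty_lt_exp_forty.le),
    pathTrace_zero]
  ring

lemma pathEig'_zero : pathEig' 0 = 20 * exp 40 := by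
  have : 2 * exp 40 - (exp 40 + exp 30) ≠ 0 := by linarith [exp_thirty_lt_exp_forty]
  rw [pathEig', pathEig_zero, pathTrace_zero, pathTrace'_zero, pathDet'_zero, div_eq_iff this]
  ring

lemma pathEnergy'_zero : pathEnergy' 0 = 0 := by
  rw [pathEnergy', pathEig'_zero, pathEig_zero, pathDet_zero, pathDet'_zero, ← exp_add,
    log_exp, log_exp]
  field_simp
  ring

lemma continuous_pathEig : Continuous pathEig := by
  unfold pathEig rootPlus pathTrace pathDet; fun_prop

lemma eventually_path_pos :
    ∀ᶠ s in 𝓝 0, 0 < pathTrace s ^ 2 - 4 * pathDet s ∧ 0 < pathEig s ∧ 0 < pathDet s := by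
  have hdisc : ContinuousAt (fun s => pathTrace s ^ 2 - 4 * pathDet s) 0 := by
    unfold pathTrace pathDet; fun_prop
  have hdet : ContinuousAt pathDet 0 := by unfold pathDet; fun_prop
  refine (continuousAt_const.eventually_lt hdisc ?_).and
    ((continuousAt_const.eventually_lt continuous_pathEig.continuousAt ?_).and
      (continuousAt_const.eventually_lt hdet ?_))
  · rw [pathTrace_zero, pathDet_zero]
    nlinarith [exp_thirty_lt_exp_forty]
  · rw [pathEig_zero]; positivity
  · rw [pathDet_zero]; positivity

lemma hasDerivAt_pathEig {s : ℝ} (hdisc : 0 < pathTrace s ^ 2 - 4 * pathDet s) :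
    HasDerivAt pathEig (pathEig' s) s :=
  hasDerivAt_rootPlus (hasDerivAt_pathTrace s) (hasDerivAt_pathDet s) hdisc

lemma hasDerivAt_pathEnergy {s : ℝ} (hdisc : 0 < pathTrace s ^ 2 - 4 * pathDet s)
    (heig : 0 < pathEig s) (hdet : 0 < pathDet s) :
    HasDerivAt pathEnergy (pathEnergy' s) s := by
  have hL := ((hasDerivAt_pathEig hdisc).log heig.ne').const_mul 2
  have hD := (hasDerivAt_pathDet s).log hdet.ne'
  refine (((hL.sub hD).pow 2).div_const 8 |>.add ((hD.pow 2).div_const 24)).congr_deriv ?_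
  simp only [pathEnergy', Pi.sub_apply]
  push_cast
  ring

lemma hasDerivAt_pathTrace' : HasDerivAt pathTrace' (400 * exp 40 + 2500 * exp 30) 0 := by
  have h0 := hasDerivAt_id (0 : ℝ)
  refine ((((h0.const_mul 400).const_add 20).const_mul (exp 40)).add
    (((h0.const_mul 2500).const_add (-50)).const_mul (exp 30))).congr_deriv ?_
  simp
  ring

lemma hasDerivAt_pathDet' : HasDerivAt pathDet' (450 * (exp 40 * exp 30)) 0 := by
  have h0 := ((hasDerivAt_id (0 : ℝ)).const_mul 15).const_sub 1
  refine (h0.const_mul (30 * exp 70)).neg.congr_deriv ?_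
  simp [exp_seventy]
  ring

lemma hasDerivAt_pathEig' :
    HasDerivAt pathEig' (50 * exp 40 * (8 * exp 40 + exp 30) / (exp 40 - exp 30)) 0 := by
  obtain ⟨hdisc, -, -⟩ := eventually_path_pos.self_of_nhds
  have hL := hasDerivAt_pathEig hdisc
  have hne : 2 * pathEig 0 - pathTrace 0 ≠ 0 := by
    rw [pathEig_zero, pathTrace_zero]; linarith [exp_thirty_lt_exp_forty]
  refine (((hasDerivAt_pathTrace'.mul hL).sub hasDerivAt_pathDet').div
    ((hL.const_mul 2).sub (hasDerivAt_pathTrace 0)) hne).congr_deriv ?_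
  have : exp 40 - exp 30 ≠ 0 := (sub_pos.mpr exp_thirty_lt_exp_forty).ne'
  simp only [Pi.sub_apply, Pi.mul_apply]
  rw [pathEig_zero, pathEig'_zero, pathTrace_zero, pathTrace'_zero, pathDet'_zero,
    show 2 * exp 40 - (exp 40 + exp 30) = exp 40 - exp 30 by ring]
  field_simp
  ring

lemma hasDerivAt_pathEnergy' :
    HasDerivAt pathEnergy' (-(50 * (4 * exp 10 - 49)) / (exp 10 - 1)) 0 := by
  obtain ⟨hdisc, heig, hdet⟩ := eventually_path_pos.self_of_nhds
  have hL := hasDerivAt_pathEig hdisc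
  have hD := hasDerivAt_pathDet 0
  have hlogL := hL.log heig.ne'
  have hlogD := hD.log hdet.ne'
  have hquot := hasDerivAt_pathDet'.div hD hdet.ne'
  refine ((((hlogL.const_mul 2).sub hlogD).mul
      (((hasDerivAt_pathEig'.const_mul 2).div hL heig.ne').sub hquot)).div_const 4 |>.add
    ((hlogD.mul hquot).div_const 12)).congr_deriv ?_
  have h40 : exp 40 = exp 10 * exp 30 := by rw [← exp_add]; norm_num
  have : exp 10 - 1 ≠ 0 := (sub_pos.mpr (one_lt_exp_iff.mpr (by norm_num))).ne'
  simp only [Pi.sub_apply, Pi.div_apply]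
  rw [pathEig_zero, pathEig'_zero, pathDet_zero, pathDet'_zero, ← exp_add, log_exp, log_exp, h40]
  field_simp
  ring

lemma nsq_dev_logV_pathMatrix {s : ℝ} (hs : 0 < pathDet s) :
    nsq (dev (logV (pathMatrix s))) = pathEnergy s := by
  have h20 : exp 20 ^ 2 = exp 40 := by rw [sq, ← exp_add]; norm_num
  have h15 : exp 15 ^ 2 = exp 30 := by rw [sq, ← exp_add]; norm_num
  have h35 : exp 20 * exp 15 = exp 35 := by rw [← exp_add]; norm_num
  have h70 : exp 35 ^ 2 = exp 70 := by rw [sq, ← exp_add]; norm_num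
  refine nsq_dev_logV_blockOne ?_ ?_ hs
  · rw [pathTrace, ← h20, ← h15]; ring
  · rw [pathDet, ← h70, ← h35]; ring

lemma eventually_hasDerivAt_nsq_dev_logV_pathMatrix :
    ∀ᶠ s in 𝓝 0, HasDerivAt (fun s => nsq (dev (logV (pathMatrix s)))) (pathEnergy' s) s := by
  filter_upwards [eventually_path_pos, eventually_path_pos.eventually_nhds] with s hs hnear
  exact (hasDerivAt_pathEnergy hs.1 hs.2.1 hs.2.2).congr_of_eventuallyEq
    (hnear.mono fun y hy => nsq_dev_logV_pathMatrix hy.2.2)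

lemma hasDerivAt_nsq_dev_logV_pathMatrix :
    HasDerivAt (fun s => nsq (dev (logV (pathMatrix s)))) 0 0 := by
  simpa [pathEnergy'_zero] using eventually_hasDerivAt_nsq_dev_logV_pathMatrix.self_of_nhds

lemma hasDerivAt_deriv_nsq_dev_logV_pathMatrix :
    HasDerivAt (deriv fun s => nsq (dev (logV (pathMatrix s))))
      (-(50 * (4 * exp 10 - 49)) / (exp 10 - 1)) 0 :=
  hasDerivAt_pathEnergy'.congr_of_eventuallyEq
    (eventually_hasDerivAt_nsq_dev_logV_pathMatrix.mono fun _ hs => hs.deriv)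

lemma sq_det_pathMatrix (t : ℝ) :
    (pathMatrix ((29 * √2)⁻¹ * t)).det ^ 2 = exp 70 * (15 * t - 29 * √2) ^ 2 / 1682 := by
  have h70 : exp 35 ^ 2 = exp 70 := by rw [sq, ← exp_add]; norm_num
  have h1682 : (29 * √2) ^ 2 = 1682 := by rw [mul_pow, Real.sq_sqrt (by norm_num)]; norm_num
  have : 29 * √2 ≠ 0 := by positivity
  rw [det_pathMatrix, mul_pow, h70,
    show 1 - 15 * ((29 * √2)⁻¹ * t) = (29 * √2 - 15 * t) / (29 * √2) by field_simp, div_pow,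
    h1682]
  ring

lemma det_pathMatrix_pos {t : ℝ} (ht : t < 1) : 0 < (pathMatrix ((29 * √2)⁻¹ * t)).det := by
  have : 1 ≤ √2 := Real.one_le_sqrt.mpr (by norm_num)
  have : 15 * ((29 * √2)⁻¹ * t) < 1 := by
    rw [← div_eq_inv_mul, mul_div_assoc', div_lt_one (by positivity)]
    linarith
  rw [det_pathMatrix]
  exact mul_pos (exp_pos 35) (by linarith)

end

/-- The explicit three-dimensional counterexample: for `F = diag(1, e²⁰, e¹⁵)`,
`ξ = (0, 1/√2, 1/√2)ᵀ` and `η = (1/29)(0, 10e²⁰, −25e¹⁵)ᵀ`, the function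
`h(t) = ‖dev₃ log √((F + tξ⊗η)(F + tξ⊗η)ᵀ)‖²` (defined near `0`, where
`[det(F + tξ⊗η)]² = e⁷⁰(15t − 29√2)²/1682 > 0`) is twice differentiable at `0` with
`h'(0) = 0` and `h''(0) = −25(4e¹⁰ − 49)/(841(e¹⁰ − 1)) < 0`. -/
theorem three_dim_concave_critical_point_devLogV
    (F : Mat 3) (hF : F = Matrix.diagonal ![1, Real.exp 20, Real.exp 15])
    (ξ η : Fin 3 → ℝ)
    (hξ : ξ = ![0, 1 / Real.sqrt 2, 1 / Real.sqrt 2])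
    (hη : η = (1 / 29 : ℝ) • ![0, 10 * Real.exp 20, -(25 * Real.exp 15)])
    (h : ℝ → ℝ)
    (hh : ∀ t : ℝ, h t = nsq (dev (matLog (matSqrt
      ((F + t • vecMulVec ξ η) * (F + t • vecMulVec ξ η)ᵀ))))) :
    (∀ t : ℝ, ((F + t • vecMulVec ξ η).det) ^ 2
      = Real.exp 70 * (15 * t - 29 * Real.sqrt 2) ^ 2 / 1682) ∧
    (∃ ε : ℝ, 0 < ε ∧ ∀ t ∈ Set.Ioo (-ε) ε, 0 < (F + t • vecMulVec ξ η).det) ∧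
    DifferentiableAt ℝ h 0 ∧
    DifferentiableAt ℝ (deriv h) 0 ∧
    deriv h 0 = 0 ∧
    deriv (deriv h) 0 = -(25 * (4 * Real.exp 10 - 49)) / (841 * (Real.exp 10 - 1)) ∧
    -(25 * (4 * Real.exp 10 - 49)) / (841 * (Real.exp 10 - 1)) < 0 := by
  subst hF hξ hη
  set c : ℝ := (29 * √2)⁻¹
  set k : ℝ → ℝ := fun s => nsq (dev (logV (pathMatrix s)))
  have hh' : h = fun t => k (c * t) :=
    funext fun t => by rw [hh, diagonal_add_smul_vecMulVec]; rfl
  have h₀ : HasDerivAt h 0 0 := by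
    rw [hh']
    exact (hasDerivAt_comp_mul_left (k := k) (x := 0)
      (by simpa using hasDerivAt_nsq_dev_logV_pathMatrix)).congr_deriv (mul_zero c)
  have h₁ : HasDerivAt (deriv h) (c ^ 2 * (-(50 * (4 * exp 10 - 49)) / (exp 10 - 1))) 0 := by
    rw [hh']
    exact hasDerivAt_deriv_comp_mul_left (k := k)
      (by simpa using hasDerivAt_deriv_nsq_dev_logV_pathMatrix)
  have hexp : 61 ≤ exp 10 := by linarith [quadratic_le_exp_of_nonneg (by norm_num : (0 : ℝ) ≤ 10)]
  refine ⟨fun t => ?_, ⟨1, one_pos, fun t ht => ?_⟩, h₀.differentiableAt, h₁.differentiableAt,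
    h₀.deriv, h₁.deriv.trans ?_, ?_⟩
  · rw [diagonal_add_smul_vecMulVec, sq_det_pathMatrix]
  · rw [diagonal_add_smul_vecMulVec]; exact det_pathMatrix_pos ht.2
  · have : exp 10 - 1 ≠ 0 := by linarith
    rw [inv_pow, mul_pow, Real.sq_sqrt (by norm_num)]
    field_simp
    ring
  · apply div_neg_of_neg_of_pos <;> nlinarith
end
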